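/- arXiv:1803.07810 — 2 statements merged into one kernel-verified Lean document; each statement's English description precedes it below -/
import Mathlib

section
/- For the single-qubit Lindbladian L(ρ) := -i[(Δ/2)σ_z + u σ_x, ρ] + Γ D_{σ₋}(ρ), with Γ > 0, the equation L(ρ̄) = 0, Tr(ρ̄) = 1 has a unique Hermitian solution ρ̄ which is a density operator (positive semidefinite with trace one). -/
open Matrix Complex
open scoped ComplexOrder

/-!
The Lindbladian is linear, so uniqueness reduces to showing that its kernel contains no nonzero
trace-zero matrix; in coordinates this is a linear system which forces the (0,0) entry to vanish
because its coefficient is `Γ (Γ² + 4Δ² + 8u²) ≠ 0`. The steady state is written as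
`BᴴB / tr(BᴴB)` for an explicit triangular `B`, so it is positive semidefinite by construction,
and `L(BᴴB) = 0` is a direct computation.
-/

noncomputable section

section Lindblad

variable {n : Type*} [Fintype n]

def lindbladian (H L : Matrix n n ℂ) (γ : ℝ) : Matrix n n ℂ →ₗ[ℂ] Matrix n n ℂ where
  toFun ρ := (-I) • (H * ρ - ρ * H)
    + (γ : ℂ) • (L * ρ * Lᴴ - (1 / 2 : ℂ) • (Lᴴ * L * ρ) - (1 / 2 : ℂ) • (ρ * (Lᴴ * L)))
  map_add' ρ σ := by
    simp only [mul_add, add_mul]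
    module
  map_smul' c ρ := by
    simp only [Matrix.mul_smul, Matrix.smul_mul, RingHom.id_apply]
    module

end Lindblad

def pauliX : Matrix (Fin 2) (Fin 2) ℂ := !![0, 1; 1, 0]
def pauliY : Matrix (Fin 2) (Fin 2) ℂ := !![0, -I; I, 0]
def pauliZ : Matrix (Fin 2) (Fin 2) ℂ := !![1, 0; 0, -1]
def sigmaMinus : Matrix (Fin 2) (Fin 2) ℂ := (1 / 2 : ℂ) • (pauliX - I • pauliY)

lemma sigmaMinus_eq : sigmaMinus = !![0, 0; 1, 0] := by
  ext i j
  fin_cases i <;> fin_cases j <;> norm_num [sigmaMinus, pauliX, pauliY]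

lemma sigmaMinus_conjTranspose : sigmaMinusᴴ = !![0, 1; 0, 0] := by
  rw [sigmaMinus_eq]
  ext i j
  fin_cases i <;> fin_cases j <;> simp

namespace DrivenQubit

variable (Δ u Γ : ℝ)

def hamiltonian : Matrix (Fin 2) (Fin 2) ℂ := ((Δ : ℂ) / 2) • pauliZ + (u : ℂ) • pauliX

def lindbladian : Matrix (Fin 2) (Fin 2) ℂ →ₗ[ℂ] Matrix (Fin 2) (Fin 2) ℂ :=
  _root_.lindbladian (hamiltonian Δ u) sigmaMinus Γ

lemma hamiltonian_eq : hamiltonian Δ u = !![(Δ : ℂ) / 2, u; u, -(Δ / 2)] := by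
  ext i j
  fin_cases i <;> fin_cases j <;> simp [hamiltonian, pauliX, pauliZ]

lemma lindbladian_apply (a b c d : ℂ) :
    lindbladian Δ u Γ !![a, b; c, d] =
      !![I * u * (b - c) - Γ * a, I * u * (a - d) - (I * Δ + Γ / 2) * b;
        I * u * (d - a) + (I * Δ - Γ / 2) * c, I * u * (c - b) + Γ * a] := by
  simp only [lindbladian, _root_.lindbladian, LinearMap.coe_mk, AddHom.coe_mk, hamiltonian_eq]
  rw [sigmaMinus_conjTranspose, sigmaMinus_eq]
  simp only [mul_fin_two]
  ext i j
  fin_cases i <;> fin_cases j <;> simp <;> ring_nf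

def steadyStateFactor : Matrix (Fin 2) (Fin 2) ℂ :=
  !![2 * (u : ℂ), -2 * (Δ : ℂ) - I * Γ; 0, 2 * (u : ℂ)]

lemma steadyStateFactor_conjTranspose :
    (steadyStateFactor Δ u Γ)ᴴ = !![2 * (u : ℂ), 0; -2 * (Δ : ℂ) + I * Γ, 2 * (u : ℂ)] := by
  ext i j
  fin_cases i <;> fin_cases j <;> simp [steadyStateFactor]

lemma steadyStateFactor_gram :
    (steadyStateFactor Δ u Γ)ᴴ * steadyStateFactor Δ u Γ =
      !![4 * (u : ℂ) ^ 2, -2 * u * (2 * Δ + I * Γ);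
        -2 * u * (2 * Δ - I * Γ), (Γ : ℂ) ^ 2 + 4 * Δ ^ 2 + 4 * u ^ 2] := by
  rw [steadyStateFactor_conjTranspose, steadyStateFactor, mul_fin_two]
  congr 1
  ring_nf
  rw [I_sq]
  ring_nf

lemma eq_zero_of_lindbladian_eq_zero_of_trace_eq_zero (hΓ : 0 < Γ)
    {ρ : Matrix (Fin 2) (Fin 2) ℂ} (hL : lindbladian Δ u Γ ρ = 0) (htr : ρ.trace = 0) : ρ = 0 := by
  obtain ⟨a, b, c, d, rfl⟩ : ∃ a b c d, ρ = !![a, b; c, d] := ⟨_, _, _, _, eta_fin_two ρ⟩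
  rw [lindbladian_apply] at hL
  rw [trace_fin_two_of] at htr
  obtain ⟨⟨e00, e01⟩, e10, -⟩ := by
    simpa [← Matrix.ext_iff, Fin.forall_fin_two] using hL
  have hb : (Γ / 2 + I * Δ) * b = 2 * I * u * a := by
    linear_combination -e01 - I * u * htr
  have hc : (Γ / 2 - I * Δ) * c = -2 * I * u * a := by
    linear_combination -e10 + I * u * htr
  have ha : a * (Γ * (8 * u ^ 2 + Γ ^ 2 + 4 * Δ ^ 2)) = 0 := by
    linear_combination -4 * (Γ / 2 + I * Δ) * (Γ / 2 - I * Δ) * e00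
      + 4 * I * u * (Γ / 2 - I * Δ) * hb - 4 * I * u * (Γ / 2 + I * Δ) * hc
      + 4 * a * Γ * (2 * u ^ 2 + Δ ^ 2) * I_sq
  have hD : (Γ : ℂ) * (8 * u ^ 2 + Γ ^ 2 + 4 * Δ ^ 2) ≠ 0 := by
    exact_mod_cast (by positivity : (0 : ℝ) < Γ * (8 * u ^ 2 + Γ ^ 2 + 4 * Δ ^ 2)).ne'
  have hp : (Γ / 2 + I * Δ : ℂ) ≠ 0 := fun h => by simpa [hΓ.ne'] using congrArg re h
  have hq : (Γ / 2 - I * Δ : ℂ) ≠ 0 := fun h => by simpa [hΓ.ne'] using congrArg re h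
  obtain rfl : a = 0 := (mul_eq_zero.mp ha).resolve_right hD
  obtain rfl : b = 0 := (mul_eq_zero.mp (by simpa using hb)).resolve_left hp
  obtain rfl : c = 0 := (mul_eq_zero.mp (by simpa using hc)).resolve_left hq
  obtain rfl : d = 0 := by simpa using htr
  exact (eta_fin_two 0).symm

def steadyState : Matrix (Fin 2) (Fin 2) ℂ :=
  (Γ ^ 2 + 4 * Δ ^ 2 + 8 * u ^ 2)⁻¹ • ((steadyStateFactor Δ u Γ)ᴴ * steadyStateFactor Δ u Γ)

lemma steadyState_posSemidef : (steadyState Δ u Γ).PosSemidef :=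
  (posSemidef_conjTranspose_mul_self _).smul (by positivity)

lemma trace_steadyState (hΓ : 0 < Γ) : (steadyState Δ u Γ).trace = 1 := by
  have hD : (Γ ^ 2 + 4 * Δ ^ 2 + 8 * u ^ 2 : ℂ) ≠ 0 := by
    exact_mod_cast (by positivity : (0 : ℝ) < Γ ^ 2 + 4 * Δ ^ 2 + 8 * u ^ 2).ne'
  rw [steadyState, trace_smul, steadyStateFactor_gram, trace_fin_two_of, Complex.real_smul]
  push_cast
  field_simp
  ring

lemma lindbladian_steadyState : lindbladian Δ u Γ (steadyState Δ u Γ) = 0 := by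
  rw [steadyState, LinearMap.map_smul_of_tower, steadyStateFactor_gram, lindbladian_apply]
  convert smul_zero _
  ext i j
  fin_cases i <;> fin_cases j <;> simp <;> ring_nf <;> simp only [I_sq] <;> ring

lemma eq_steadyState_of_lindbladian_eq_zero (hΓ : 0 < Γ) {ρ : Matrix (Fin 2) (Fin 2) ℂ}
    (hL : lindbladian Δ u Γ ρ = 0) (htr : ρ.trace = 1) : ρ = steadyState Δ u Γ :=
  sub_eq_zero.mp <| eq_zero_of_lindbladian_eq_zero_of_trace_eq_zero Δ u Γ hΓ
    (by rw [map_sub, hL, lindbladian_steadyState, sub_zero])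
    (by rw [trace_sub, htr, trace_steadyState Δ u Γ hΓ, sub_self])

end DrivenQubit

/-- For the single-qubit Lindbladian
`L(ρ) = -i[(Δ/2)σ_z + u σ_x, ρ] + Γ D_{σ₋}(ρ)` with `Γ > 0`, there is a unique
Hermitian trace-one solution of `L(ρ̄) = 0`, and it is a density operator
(positive semidefinite). -/
theorem stmt_10 (Δ u Γ : ℝ) (hΓ : 0 < Γ) :
    let σx : Matrix (Fin 2) (Fin 2) ℂ := !![0, 1; 1, 0]
    let σy : Matrix (Fin 2) (Fin 2) ℂ := !![0, -I; I, 0]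
    let σz : Matrix (Fin 2) (Fin 2) ℂ := !![1, 0; 0, -1]
    let σm : Matrix (Fin 2) (Fin 2) ℂ := (1 / 2 : ℂ) • (σx - I • σy)
    let H : Matrix (Fin 2) (Fin 2) ℂ := ((Δ : ℂ) / 2) • σz + (u : ℂ) • σx
    let Lop : Matrix (Fin 2) (Fin 2) ℂ → Matrix (Fin 2) (Fin 2) ℂ := fun ρ =>
      (-I) • (H * ρ - ρ * H)
        + (Γ : ℂ) • (σm * ρ * σmᴴ - (1 / 2 : ℂ) • (σmᴴ * σm * ρ)
            - (1 / 2 : ℂ) • (ρ * (σmᴴ * σm)))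
    (∃! ρbar : Matrix (Fin 2) (Fin 2) ℂ,
        ρbar.IsHermitian ∧ Lop ρbar = 0 ∧ ρbar.trace = 1)
    ∧ ∀ ρbar : Matrix (Fin 2) (Fin 2) ℂ,
        ρbar.IsHermitian → Lop ρbar = 0 → ρbar.trace = 1 → ρbar.PosSemidef := by
  intro σx σy σz σm H Lop
  change (∃! ρbar, ρbar.IsHermitian ∧ DrivenQubit.lindbladian Δ u Γ ρbar = 0 ∧ ρbar.trace = 1)
    ∧ ∀ ρbar, ρbar.IsHermitian → DrivenQubit.lindbladian Δ u Γ ρbar = 0 → ρbar.trace = 1 →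
      ρbar.PosSemidef
  have hsteady := DrivenQubit.steadyState_posSemidef Δ u Γ
  refine ⟨⟨_, ⟨hsteady.isHermitian, DrivenQubit.lindbladian_steadyState Δ u Γ,
      DrivenQubit.trace_steadyState Δ u Γ hΓ⟩,
      fun ρ h => DrivenQubit.eq_steadyState_of_lindbladian_eq_zero Δ u Γ hΓ h.2.1 h.2.2⟩,
    fun ρ _ hL htr => DrivenQubit.eq_steadyState_of_lindbladian_eq_zero Δ u Γ hΓ hL htr ▸ hsteady⟩
end
end

section
/- Let M and R be Hermitian matrices on ℂ^N such that R is positive semidefinite and: (a) for every z with R z = 0 one has z† M z ≥ 0, and (b) for every z with R z = 0 and z† M z = 0 one has M z = 0. Then there exists τ̄ > 0 such that M + τ̄ R is positive semidefinite. -/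
/-!
Let `K = ker R ∩ ker M` and let `W` be a complement of `K`. Vectors of `K` do not contribute to the
quadratic form of `M + τ R`, so it suffices to make that form nonnegative on `W`, and by
homogeneity positive on the unit sphere of `W`. A unit vector `w ∈ W` either has `w† R w > 0`, or
`R w = 0`, and then (a), (b) and `w ∉ K` force `w† M w > 0`; in both cases `w† (M + τ R) w > 0`
for all large `τ`. These are open conditions, increasing in `τ`, so compactness of the sphere
yields a single `τ` that works for every unit vector of `W`.
-/

open Matrix
open scoped ComplexOrder

theorem IsCompact.exists_forall_pos_add_mul {X : Type*} [TopologicalSpace X] {s : Set X}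
    (hs : IsCompact s) {f g : X → ℝ} (hf : Continuous f) (hg : Continuous g) (hg₀ : ∀ x, 0 ≤ g x)
    (hfg : ∀ x ∈ s, 0 < f x ∨ 0 < g x) : ∃ τ : ℝ, 0 < τ ∧ ∀ x ∈ s, 0 < f x + τ * g x := by
  let U : ℕ → Set X := fun k ↦ {x | 0 < f x + (k + 1) * g x}
  have hU_mono : Monotone U := by
    intro k l hkl x (hx : 0 < f x + (k + 1) * g x)
    have : (k : ℝ) ≤ l := by exact_mod_cast hkl
    show 0 < f x + (l + 1) * g x
    nlinarith [hg₀ x]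
  have hU_open (k : ℕ) : IsOpen (U k) :=
    isOpen_lt continuous_const (hf.add (continuous_const.mul hg))
  have hsU : s ⊆ ⋃ k, U k := by
    intro x hx
    obtain ⟨k, hk⟩ := exists_nat_gt (-f x / g x)
    simp only [Set.mem_iUnion, U]
    rcases hfg x hx with hfx | hgx
    · exact ⟨0, by simpa using add_pos_of_pos_of_nonneg hfx (hg₀ x)⟩
    · refine ⟨k, show 0 < f x + (k + 1) * g x from ?_⟩
      rw [div_lt_iff₀ hgx] at hk
      linarith
  obtain ⟨k, hk⟩ := hs.elim_directed_cover U hU_open hsU hU_mono.directed_le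
  exact ⟨k + 1, by positivity, hk⟩

namespace Matrix

variable {n 𝕜 : Type*} [Fintype n] [RCLike 𝕜]

theorem re_star_dotProduct_mulVec_ofReal_smul (A : Matrix n n 𝕜) (r : ℝ) (x : n → 𝕜) :
    RCLike.re (star ((r : 𝕜) • x) ⬝ᵥ A *ᵥ ((r : 𝕜) • x)) =
      r ^ 2 * RCLike.re (star x ⬝ᵥ A *ᵥ x) := by
  rw [star_smul, mulVec_smul, smul_dotProduct, dotProduct_smul, smul_eq_mul, smul_eq_mul,
    RCLike.star_def, RCLike.conj_ofReal, ← mul_assoc, ← RCLike.ofReal_mul, RCLike.re_ofReal_mul,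
    sq]

theorem re_star_dotProduct_mulVec_add_smul (A B : Matrix n n 𝕜) (τ : ℝ) (x : n → 𝕜) :
    RCLike.re (star x ⬝ᵥ (A + τ • B) *ᵥ x) =
      RCLike.re (star x ⬝ᵥ A *ᵥ x) + τ * RCLike.re (star x ⬝ᵥ B *ᵥ x) := by
  rw [add_mulVec, smul_mulVec, dotProduct_add, dotProduct_smul, map_add, RCLike.smul_re]

theorem re_star_dotProduct_mulVec_nonneg_of_forall_norm_eq_one {A : Matrix n n 𝕜}
    {W : Submodule 𝕜 (n → 𝕜)} (h : ∀ u ∈ W, ‖u‖ = 1 → 0 < RCLike.re (star u ⬝ᵥ A *ᵥ u))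
    {w : n → 𝕜} (hw : w ∈ W) : 0 ≤ RCLike.re (star w ⬝ᵥ A *ᵥ w) := by
  rcases eq_or_ne w 0 with rfl | hw₀
  · simp
  have hu := h _ (W.smul_mem _ hw) (norm_smul_inv_norm hw₀)
  rw [← RCLike.ofReal_inv, re_star_dotProduct_mulVec_ofReal_smul] at hu
  exact (pos_of_mul_pos_right hu (by positivity)).le

theorem IsHermitian.star_dotProduct_mulVec_add_of_mulVec_eq_zero {A : Matrix n n 𝕜}
    (hA : A.IsHermitian) {z : n → 𝕜} (hz : A *ᵥ z = 0) (w : n → 𝕜) :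
    star (z + w) ⬝ᵥ A *ᵥ (z + w) = star w ⬝ᵥ A *ᵥ w := by
  have hz' : star z ᵥ* A = 0 := by rw [← hA.eq, ← star_mulVec, hz, star_zero]
  rw [mulVec_add, hz, zero_add, star_add, add_dotProduct, dotProduct_mulVec, hz',
    zero_dotProduct, zero_add]

theorem IsHermitian.posSemidef_of_codisjoint {A : Matrix n n 𝕜} (hA : A.IsHermitian)
    {K W : Submodule 𝕜 (n → 𝕜)} (hKW : Codisjoint K W) (hK : ∀ z ∈ K, A *ᵥ z = 0)
    (hW : ∀ w ∈ W, 0 ≤ RCLike.re (star w ⬝ᵥ A *ᵥ w)) : A.PosSemidef := by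
  refine .of_dotProduct_mulVec_nonneg hA fun x ↦ ?_
  obtain ⟨z, w, hz, hw, rfl⟩ := Submodule.codisjoint_iff_exists_add_eq.mp hKW x
  rw [hA.star_dotProduct_mulVec_add_of_mulVec_eq_zero (hK z hz)]
  exact RCLike.nonneg_iff.mpr ⟨hW w hw, hA.im_star_dotProduct_mulVec_self w⟩

theorem re_star_dotProduct_mulVec_pos_or_pos {M R : Matrix n n 𝕜} (hR : R.PosSemidef)
    (ha : ∀ z, R *ᵥ z = 0 → 0 ≤ star z ⬝ᵥ M *ᵥ z)
    (hb : ∀ z, R *ᵥ z = 0 → star z ⬝ᵥ M *ᵥ z = 0 → M *ᵥ z = 0) {W : Submodule 𝕜 (n → 𝕜)}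
    (hW : Disjoint (LinearMap.ker R.mulVecLin ⊓ LinearMap.ker M.mulVecLin) W)
    {w : n → 𝕜} (hwW : w ∈ W) (hw₀ : w ≠ 0) :
    0 < RCLike.re (star w ⬝ᵥ M *ᵥ w) ∨ 0 < RCLike.re (star w ⬝ᵥ R *ᵥ w) := by
  by_cases hRw : R *ᵥ w = 0
  · left
    have hMw : star w ⬝ᵥ M *ᵥ w ≠ 0 := fun hMw ↦
      hw₀ <| Submodule.disjoint_def.mp hW w ⟨hRw, hb w hRw hMw⟩ hwW
    exact (RCLike.pos_iff.mp ((ha w hRw).lt_of_ne' hMw)).1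
  · right
    have hRw' : star w ⬝ᵥ R *ᵥ w ≠ 0 := (hRw <| (hR.dotProduct_mulVec_zero_iff w).mp ·)
    exact (RCLike.pos_iff.mp ((hR.dotProduct_mulVec_nonneg w).lt_of_ne' hRw')).1

end Matrix

/-- If `M` is Hermitian, `R` positive semidefinite, `z† M z ≥ 0` for all `z ∈ ker R`, and
`M z = 0` whenever `z ∈ ker R` and `z† M z = 0`, then there exists `τ̄ > 0` such that
`M + τ̄ R` is positive semidefinite. -/
theorem stmt_13 (N : ℕ) (M R : Matrix (Fin N) (Fin N) ℂ)
    (hM : M.IsHermitian) (hR : R.PosSemidef)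
    (ha : ∀ z : Fin N → ℂ, R.mulVec z = 0 → (0 : ℂ) ≤ star z ⬝ᵥ M.mulVec z)
    (hb : ∀ z : Fin N → ℂ, R.mulVec z = 0 → star z ⬝ᵥ M.mulVec z = 0 → M.mulVec z = 0) :
    ∃ τ : ℝ, 0 < τ ∧ (M + τ • R).PosSemidef := by
  obtain ⟨W, hKW⟩ := (LinearMap.ker R.mulVecLin ⊓ LinearMap.ker M.mulVecLin).exists_isCompl
  have hS : IsCompact (Metric.sphere 0 1 ∩ W : Set (Fin N → ℂ)) :=
    (isCompact_sphere 0 1).inter_right W.closed_of_finiteDimensional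
  obtain ⟨τ, hτ, hpos⟩ := hS.exists_forall_pos_add_mul (by fun_prop) (by fun_prop)
    hR.re_dotProduct_nonneg fun w ⟨hw₁, hwW⟩ ↦
      re_star_dotProduct_mulVec_pos_or_pos hR ha hb hKW.disjoint hwW
        (Metric.ne_of_mem_sphere hw₁ one_ne_zero)
  refine ⟨τ, hτ, (hM.add (hR.1.smul (IsSelfAdjoint.all τ))).posSemidef_of_codisjoint
    hKW.codisjoint (fun z ⟨hRz, hMz⟩ ↦ ?_) fun w hw ↦ ?_⟩
  · rw [add_mulVec, smul_mulVec, ← mulVecLin_apply, ← mulVecLin_apply R, hRz, hMz, smul_zero,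
      add_zero]
  · refine re_star_dotProduct_mulVec_nonneg_of_forall_norm_eq_one (fun u hu hu₁ ↦ ?_) hw
    rw [re_star_dotProduct_mulVec_add_smul]
    exact hpos u ⟨mem_sphere_zero_iff_norm.mpr hu₁, hu⟩
end
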